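/- arXiv:1706.09668 — 4 statements merged into one kernel-verified Lean document; each statement's English description precedes it below -/
import Mathlib

section
/- Let $f_N : [0,\infty) \to \mathbb{R}$ be a sequence of functions that is uniformly bounded and equicontinuous, and suppose that for every $\lambda > 0$ the limit $\lim_{N\to\infty} \int_0^\infty e^{-\lambda t} f_N(t)\,dt$ exists. Then there exists a function $f_\infty : [0,\infty) \to \mathbb{R}$ such that $f_N$ converges to $f_\infty$ uniformly on every compact subset of $[0,\infty)$, and moreover $\lim_{N\to\infty} \int_0^\infty e^{-\lambda t} f_N(t)\,dt = \int_0^\infty e^{-\lambda t} f_\infty(t)\,dt$ for every $\lambda > 0$. -/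
/-!
By Arzelà–Ascoli (a diagonal extraction on a countable dense set, upgraded by equicontinuity),
every subsequence of `f` has a further subsequence converging pointwise on `[0, ∞)` to a bounded
continuous function, and by dominated convergence the Laplace transform of that limit is the
limit of the Laplace transforms. The Laplace transform is injective on bounded continuous
functions (the substitution `x = exp (-t)` turns it into the moment sequence of a continuous
function on `[0, 1]`, and Weierstrass approximation shows that a continuous function with
vanishing moments vanishes), so all subsequential limits agree, and the whole sequence converges
pointwise. Equicontinuity upgrades pointwise convergence to uniform convergence on compacts.
-/

open MeasureTheory Filter Real Topology Set

theorem Metric.equicontinuousOn_of_dist_lt {ι X α : Type*} [PseudoMetricSpace X]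
    [PseudoMetricSpace α] {F : ι → X → α} {S : Set X}
    (h : ∀ x ∈ S, ∀ ε > 0, ∃ δ > 0, ∀ i, ∀ y ∈ S, dist y x < δ → dist (F i y) (F i x) < ε) :
    EquicontinuousOn F S := fun x hx =>
  (nhdsWithin_basis_ball.equicontinuousWithinAt_iff uniformity_basis_dist).2 fun ε hε =>
    let ⟨δ, hδ, hδε⟩ := h x hx ε hε
    ⟨δ, hδ, fun y hy i => by simpa [dist_comm] using hδε i y hy.2 hy.1⟩

theorem EquicontinuousWithinAt.cauchySeq_of_mem_closure {X α : Type*} [TopologicalSpace X]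
    [UniformSpace α] {F : ℕ → X → α} {S D : Set X} {x : X} (hF : EquicontinuousWithinAt F S x)
    (hDS : D ⊆ S) (hx : x ∈ closure D) (hD : ∀ y ∈ D, CauchySeq (F · y)) :
    CauchySeq (F · x) := by
  simp_rw [cauchySeq_iff] at hD ⊢
  intro V hV
  obtain ⟨W, hW, hWsymm, hWV⟩ := comp_comp_symm_mem_uniformity_sets hV
  have := mem_closure_iff_nhdsWithin_neBot.1 hx
  obtain ⟨y, hyD, hFy⟩ : ∃ y, y ∈ D ∧ ∀ k, (F k x, F k y) ∈ W :=
    (eventually_mem_nhdsWithin.and ((hF W hW).filter_mono (nhdsWithin_mono x hDS))).exists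
  obtain ⟨N, hN⟩ := hD y hyD W hW
  exact ⟨N, fun m hm n hn => hWV ⟨_, ⟨_, hFy m, hN m hm n hn⟩, hWsymm.symm _ _ (hFy n)⟩⟩

theorem exists_subseq_tendsto_of_countable {X α : Type*} [PseudoMetricSpace α] [ProperSpace α]
    {F : ℕ → X → α} {D : Set X} (hD : D.Countable)
    (hb : ∀ x ∈ D, Bornology.IsBounded (range (F · x))) :
    ∃ φ : ℕ → ℕ, StrictMono φ ∧ ∀ x ∈ D, ∃ a, Tendsto (fun k => F (φ k) x) atTop (𝓝 a) := by
  have := hD.to_subtype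
  have hK : IsCompact (univ.pi fun x : D => closure (range (F · x))) :=
    isCompact_univ_pi fun x => (hb x x.2).isCompact_closure
  obtain ⟨a, -, φ, hφ, hlim⟩ := hK.tendsto_subseq (x := fun k (x : D) => F k x)
    fun k x _ => subset_closure (mem_range_self k)
  exact ⟨φ, hφ, fun x hx => ⟨a ⟨x, hx⟩, tendsto_pi_nhds.1 hlim ⟨x, hx⟩⟩⟩

theorem EquicontinuousOn.exists_subseq_tendsto {X α : Type*} [TopologicalSpace X]
    [TopologicalSpace.PseudoMetrizableSpace X] [TopologicalSpace.SeparableSpace X]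
    [PseudoMetricSpace α] [ProperSpace α] {F : ℕ → X → α} {S : Set X}
    (hF : EquicontinuousOn F S) (hb : ∀ x ∈ S, Bornology.IsBounded (range (F · x))) :
    ∃ φ : ℕ → ℕ, StrictMono φ ∧ ∀ x ∈ S, ∃ a, Tendsto (fun k => F (φ k) x) atTop (𝓝 a) := by
  obtain ⟨D, hDS, hDc, hSD⟩ :=
    (TopologicalSpace.IsSeparable.of_separableSpace S).exists_countable_dense_subset
  obtain ⟨φ, hφ, hlim⟩ := exists_subseq_tendsto_of_countable hDc fun x hx => hb x (hDS hx)
  refine ⟨φ, hφ, fun x hx => cauchySeq_tendsto_of_complete ?_⟩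
  refine ((hF x hx).comp φ).cauchySeq_of_mem_closure hDS (hSD hx) fun y hy => ?_
  obtain ⟨a, ha⟩ := hlim y hy
  exact ha.cauchySeq

theorem EquicontinuousOn.tendstoUniformlyOn_of_tendsto {ι X α : Type*} [TopologicalSpace X]
    [UniformSpace α] {F : ι → X → α} {f : X → α} {K : Set X} {l : Filter ι} (hK : IsCompact K)
    (hF : EquicontinuousOn F K) (h : ∀ x ∈ K, Tendsto (F · x) l (𝓝 (f x))) :
    TendstoUniformlyOn F f l K := by
  have := (EquicontinuousOn.tendsto_uniformOnFun_iff_pi' (𝔖 := {K}) (by simpa using hK)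
    (by simpa using hF) l f).2 ?_
  · exact UniformOnFun.tendsto_iff_tendstoUniformlyOn.1 this K rfl
  · rw [tendsto_pi_nhds]
    rintro ⟨x, hx⟩
    exact h x (by simpa using hx)

theorem exists_subseq_tendsto_of_equicontinuousOn_Ici {F : ℕ → ℝ → ℝ} {M : ℝ}
    (hb : ∀ k, ∀ t ≥ 0, |F k t| ≤ M) (hF : EquicontinuousOn F (Ici 0)) :
    ∃ φ : ℕ → ℕ, StrictMono φ ∧ ∃ g : ℝ → ℝ, ContinuousOn g (Ici 0) ∧ (∀ t ≥ 0, |g t| ≤ M) ∧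
      ∀ t ≥ 0, Tendsto (fun k => F (φ k) t) atTop (𝓝 (g t)) := by
  obtain ⟨φ, hφ, hlim⟩ := hF.exists_subseq_tendsto fun t ht =>
    isBounded_iff_forall_norm_le.2 ⟨M, forall_mem_range.2 fun k => hb k t ht⟩
  choose! g hg using hlim
  exact ⟨φ, hφ, g, Tendsto.continuousOn_of_equicontinuousOn hg (hF.comp φ),
    fun t ht => le_of_tendsto' (hg t ht).abs fun k => hb _ t ht, hg⟩

theorem integral_polynomial_mul_eq_zero {u : ℝ → ℝ} {a b : ℝ} (hu : ContinuousOn u (Icc a b))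
    (h : ∀ n : ℕ, ∫ x in Icc a b, x ^ n * u x = 0) (p : Polynomial ℝ) :
    ∫ x in Icc a b, p.eval x * u x = 0 := by
  simp_rw [Polynomial.eval_eq_sum_range, Finset.sum_mul, mul_assoc]
  rw [integral_finsetSum]
  · simp [integral_const_mul, h]
  · exact fun i _ =>
      (((continuous_pow i).continuousOn.mul hu).integrableOn_compact isCompact_Icc).const_mul _

theorem eqOn_zero_of_integral_pow_mul_eq_zero {u : ℝ → ℝ} {a b : ℝ} (hab : a < b)
    (hu : ContinuousOn u (Icc a b)) (h : ∀ n : ℕ, ∫ x in Icc a b, x ^ n * u x = 0) :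
    EqOn u 0 (Icc a b) := by
  have husq : IntegrableOn (fun x => u x * u x) (Icc a b) :=
    (hu.mul hu).integrableOn_compact isCompact_Icc
  obtain ⟨B, hB⟩ := isCompact_Icc.exists_bound_of_continuousOn hu
  have hB0 : 0 ≤ B := (norm_nonneg _).trans (hB a (left_mem_Icc.2 hab.le))
  -- approximate the first factor of `u * u` by polynomials, which are orthogonal to `u`
  have hsq : ∫ x in Icc a b, u x * u x = 0 := by
    refine abs_nonpos_iff.1 (le_of_forall_pos_lt_add fun ε hε => ?_)
    set C := B * (b - a) + 1
    have hC : 0 < C := by nlinarith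
    obtain ⟨p, hp⟩ := exists_polynomial_near_of_continuousOn a b u hu (ε / C) (by positivity)
    have hpu : IntegrableOn (fun x => p.eval x * u x) (Icc a b) :=
      (p.continuous.continuousOn.mul hu).integrableOn_compact isCompact_Icc
    have hdiff : ∫ x in Icc a b, u x * u x = ∫ x in Icc a b, (u x - p.eval x) * u x := by
      simp_rw [sub_mul]
      rw [integral_sub husq hpu, integral_polynomial_mul_eq_zero hu h, sub_zero]
    have hle : ∀ x ∈ Icc a b, ‖(u x - p.eval x) * u x‖ ≤ ε / C * B := fun x hx => by
      rw [norm_mul, Real.norm_eq_abs, abs_sub_comm]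
      exact mul_le_mul (hp x hx).le (hB x hx) (norm_nonneg _) (by positivity)
    calc |∫ x in Icc a b, u x * u x|
        ≤ ε / C * B * volume.real (Icc a b) := by
          rw [hdiff, ← Real.norm_eq_abs]
          exact norm_setIntegral_le_of_norm_le_const measure_Icc_lt_top hle
      _ = ε * (B * (b - a) / C) := by
          rw [Real.volume_real_Icc_of_le hab.le]; ring
      _ < 0 + ε := by
          rw [zero_add]
          exact mul_lt_of_lt_one_right hε ((div_lt_one hC).2 (lt_add_one _))
  have hae : (fun x => u x * u x) =ᵐ[volume.restrict (Icc a b)] 0 :=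
    (integral_eq_zero_iff_of_nonneg (fun x => mul_self_nonneg _) husq).1 hsq
  exact fun x hx => mul_self_eq_zero.1
    (Measure.eqOn_Icc_of_ae_eq volume hab.ne hae (hu.mul hu) continuousOn_const hx)

theorem integral_Ioo_zero_one_eq_integral_Ioi_exp_neg {E : Type*} [NormedAddCommGroup E]
    [NormedSpace ℝ E] (g : ℝ → E) :
    ∫ x in Ioo 0 1, g x = ∫ t in Ioi 0, exp (-t) • g (exp (-t)) := by
  have himage : (fun t => exp (-t)) '' Ioi 0 = Ioo 0 1 := by
    ext x
    refine ⟨?_, fun hx => ⟨-log x, ?_, ?_⟩⟩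
    · rintro ⟨t, ht, rfl⟩
      exact ⟨exp_pos _, exp_lt_one_iff.2 (neg_lt_zero.2 ht)⟩
    · simpa using log_neg hx.1 hx.2
    · simp [exp_log hx.1]
  have hderiv : ∀ t ∈ Ioi (0:ℝ), HasDerivWithinAt (fun t => exp (-t)) (-exp (-t)) (Ioi 0) t :=
    fun t _ => by simpa using ((hasDerivAt_neg t).exp).hasDerivWithinAt
  rw [← himage, integral_image_eq_integral_abs_deriv_smul measurableSet_Ioi hderiv
    (fun a _ b _ hab => neg_injective (exp_injective hab))]
  simp [abs_of_pos (exp_pos _)]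

theorem continuousOn_mul_comp_neg_log {d : ℝ → ℝ} {M : ℝ} (hd : ContinuousOn d (Ici 0))
    (hb : ∀ t ≥ 0, |d t| ≤ M) : ContinuousOn (fun x => x * d (-log x)) (Icc 0 1) := by
  have hmaps : MapsTo (fun x => -log x) (Icc 0 1) (Ici 0) := fun x hx => by
    simpa using log_nonpos hx.1 hx.2
  intro x hx
  rcases hx.1.eq_or_lt with rfl | hx0
  · have hbdd : IsBoundedUnder (· ≤ ·) (𝓝[Icc 0 1] 0) (fun x => ‖d (-log x)‖) :=
      isBoundedUnder_of_eventually_le (a := M)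
        (eventually_nhdsWithin_of_forall fun x hx => hb _ (hmaps hx))
    simpa [ContinuousWithinAt] using (tendsto_nhdsWithin_of_tendsto_nhds
      (tendsto_id (x := 𝓝 (0:ℝ)))).zero_mul_isBoundedUnder_le hbdd
  · exact continuousWithinAt_id.mul
      ((hd _ (hmaps hx)).comp (f := fun x => -log x)
        (continuousAt_log hx0.ne').neg.continuousWithinAt hmaps)

noncomputable def laplaceTransform (f : ℝ → ℝ) (l : ℝ) : ℝ := ∫ t in Ioi 0, exp (-l * t) * f t

section LaplaceTransform

variable {f g : ℝ → ℝ} {M l : ℝ}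

theorem integrableOn_exp_neg_mul_mul (hl : 0 < l)
    (hf : AEStronglyMeasurable f (volume.restrict (Ioi 0))) (hb : ∀ t > 0, |f t| ≤ M) :
    IntegrableOn (fun t => exp (-l * t) * f t) (Ioi 0) :=
  (exp_neg_integrableOn_Ioi 0 hl).mul_bdd hf (ae_restrict_of_forall_mem measurableSet_Ioi hb)

theorem laplaceTransform_sub (hl : 0 < l)
    (hf : AEStronglyMeasurable f (volume.restrict (Ioi 0))) (hfb : ∀ t > 0, |f t| ≤ M)
    (hg : AEStronglyMeasurable g (volume.restrict (Ioi 0))) (hgb : ∀ t > 0, |g t| ≤ M) :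
    laplaceTransform (f - g) l = laplaceTransform f l - laplaceTransform g l := by
  simp only [laplaceTransform, Pi.sub_apply, mul_sub]
  exact integral_sub (integrableOn_exp_neg_mul_mul hl hf hfb)
    (integrableOn_exp_neg_mul_mul hl hg hgb)

theorem tendsto_laplaceTransform {ι : Type*} {p : Filter ι} [p.IsCountablyGenerated]
    {F : ι → ℝ → ℝ} (hl : 0 < l) (hF : ∀ i, AEStronglyMeasurable (F i) (volume.restrict (Ioi 0)))
    (hb : ∀ i, ∀ t > 0, |F i t| ≤ M) (h : ∀ t > 0, Tendsto (F · t) p (𝓝 (f t))) :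
    Tendsto (fun i => laplaceTransform (F i) l) p (𝓝 (laplaceTransform f l)) := by
  refine tendsto_integral_filter_of_dominated_convergence (fun t => M * exp (-l * t))
    (.of_forall fun i => ?_) (.of_forall fun i => ?_)
    ((exp_neg_integrableOn_Ioi 0 hl).const_mul M) ?_
  · exact (continuous_exp.comp (continuous_const.mul continuous_id)).aestronglyMeasurable.mul
      (hF i)
  · refine ae_restrict_of_forall_mem measurableSet_Ioi fun t ht => ?_
    rw [norm_mul, norm_of_nonneg (exp_pos _).le, mul_comm]
    exact mul_le_mul_of_nonneg_right (hb i t ht) (exp_pos _).le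
  · exact ae_restrict_of_forall_mem measurableSet_Ioi fun t ht => (h t ht).const_mul _

theorem eqOn_zero_of_laplaceTransform_eq_zero {d : ℝ → ℝ} (hd : ContinuousOn d (Ici 0))
    (hb : ∀ t ≥ 0, |d t| ≤ M) (h : ∀ l > 0, laplaceTransform d l = 0) : EqOn d 0 (Ici 0) := by
  -- substituting `x = exp (-t)` turns the Laplace transform at `n + 2` into the `n`-th moment
  have hmom : ∀ n : ℕ, ∫ x in Icc 0 1, x ^ n * (x * d (-log x)) = 0 := by
    intro n
    have hsubst : ∀ t : ℝ, exp (-t) • (exp (-t) ^ n * (exp (-t) * d (-log (exp (-t))))) =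
        exp (-(n + 2) * t) * d t := fun t => by
      rw [log_exp, neg_neg, smul_eq_mul, show -(n + 2) * t = -t + n * -t + -t by ring, exp_add,
        exp_add, exp_nat_mul]
      ring
    rw [integral_Icc_eq_integral_Ioo, integral_Ioo_zero_one_eq_integral_Ioi_exp_neg]
    simp_rw [hsubst]
    exact h (n + 2) (by positivity)
  intro t ht
  have := eqOn_zero_of_integral_pow_mul_eq_zero one_pos (continuousOn_mul_comp_neg_log hd hb) hmom
    ⟨(exp_pos (-t)).le, exp_le_one_iff.2 (neg_nonpos.2 ht)⟩
  simpa [exp_ne_zero] using this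

theorem eqOn_of_laplaceTransform_eq (hf : ContinuousOn f (Ici 0)) (hg : ContinuousOn g (Ici 0))
    (hfb : ∀ t ≥ 0, |f t| ≤ M) (hgb : ∀ t ≥ 0, |g t| ≤ M)
    (h : ∀ l > 0, laplaceTransform f l = laplaceTransform g l) : EqOn f g (Ici 0) := by
  have hmeas {u : ℝ → ℝ} (hu : ContinuousOn u (Ici 0)) :
      AEStronglyMeasurable u (volume.restrict (Ioi 0)) :=
    (hu.mono Ioi_subset_Ici_self).aestronglyMeasurable measurableSet_Ioi
  have hzero : EqOn (f - g) 0 (Ici 0) :=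
    eqOn_zero_of_laplaceTransform_eq_zero (hf.sub hg)
      (fun t ht => (abs_sub _ _).trans (add_le_add (hfb t ht) (hgb t ht))) fun l hl => by
        rw [laplaceTransform_sub hl (hmeas hf) (fun t ht => hfb t ht.le) (hmeas hg)
          (fun t ht => hgb t ht.le), h l hl, sub_self]
  exact fun t ht => sub_eq_zero.1 (hzero ht)

end LaplaceTransform

/-- Arzelà–Ascoli + Laplace transform convergence. -/
theorem stmt0
    (f : ℕ → ℝ → ℝ)
    (hcont : ∀ N, ContinuousOn (f N) (Set.Ici 0))
    (hbdd : ∃ M : ℝ, ∀ N, ∀ t : ℝ, 0 ≤ t → |f N t| ≤ M)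
    (hequi : ∀ t : ℝ, 0 ≤ t → ∀ ε : ℝ, 0 < ε → ∃ δ : ℝ, 0 < δ ∧ ∀ N, ∀ s : ℝ, 0 ≤ s →
      |s - t| < δ → |f N s - f N t| < ε)
    (hconv : ∀ l : ℝ, 0 < l → ∃ L : ℝ,
      Tendsto (fun N => ∫ t in Set.Ioi (0:ℝ), Real.exp (-l * t) * f N t) atTop (𝓝 L)) :
    ∃ finf : ℝ → ℝ,
      (∀ K : Set ℝ, K ⊆ Set.Ici 0 → IsCompact K →
        TendstoUniformlyOn (fun N => f N) finf atTop K) ∧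
      (∀ l : ℝ, 0 < l →
        Tendsto (fun N => ∫ t in Set.Ioi (0:ℝ), Real.exp (-l * t) * f N t) atTop
          (𝓝 (∫ t in Set.Ioi (0:ℝ), Real.exp (-l * t) * finf t))) := by
  obtain ⟨M, hM⟩ := hbdd
  choose L hL using hconv
  have hF : EquicontinuousOn f (Ici 0) :=
    Metric.equicontinuousOn_of_dist_lt fun t ht ε hε => by
      simpa [Real.dist_eq] using hequi t ht ε hε
  have hmeas (N : ℕ) : AEStronglyMeasurable (f N) (volume.restrict (Ioi 0)) :=
    ((hcont N).mono Ioi_subset_Ici_self).aestronglyMeasurable measurableSet_Ioi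
  have hsub : ∀ ns : ℕ → ℕ, Tendsto ns atTop atTop → ∃ (ms : ℕ → ℕ) (g : ℝ → ℝ),
      ContinuousOn g (Ici 0) ∧ (∀ t ≥ 0, |g t| ≤ M) ∧
        (∀ t ≥ 0, Tendsto (fun k => f (ns (ms k)) t) atTop (𝓝 (g t))) ∧
        ∀ l (hl : 0 < l), laplaceTransform g l = L l hl := by
    intro ns hns
    obtain ⟨ms, hms, g, hgc, hgb, hg⟩ :=
      exists_subseq_tendsto_of_equicontinuousOn_Ici (fun k => hM (ns k)) (hF.comp ns)
    refine ⟨ms, g, hgc, hgb, hg, fun l hl => tendsto_nhds_unique ?_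
      ((hL l hl).comp (hns.comp hms.tendsto_atTop))⟩
    exact tendsto_laplaceTransform hl (fun k => hmeas _) (fun k t ht => hM _ t ht.le)
      fun t ht => hg t ht.le
  obtain ⟨-, finf, hfc, hfb, -, hfL⟩ := hsub id tendsto_id
  have hpt : ∀ t ≥ 0, Tendsto (f · t) atTop (𝓝 (finf t)) := fun t ht =>
    tendsto_of_subseq_tendsto fun ns hns => by
      obtain ⟨ms, g, hgc, hgb, hg, hgL⟩ := hsub ns hns
      have hgf : EqOn g finf (Ici 0) := eqOn_of_laplaceTransform_eq hgc hfc hgb hfb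
        fun l hl => (hgL l hl).trans (hfL l hl).symm
      exact ⟨ms, hgf ht ▸ hg t ht⟩
  refine ⟨finf, fun K hK hKc => ?_, fun l hl => ?_⟩
  · exact (hF.mono hK).tendstoUniformlyOn_of_tendsto hKc fun t ht => hpt t (hK ht)
  · exact tendsto_laplaceTransform hl hmeas (fun N t ht => hM N t ht.le) fun t ht => hpt t ht.le
end

section
/- Fix $\gamma > 0$ and $d \ge 1$. Define $\omega_\theta^2 = 4\sum_{a=1}^d \sin^2(\pi \theta^a)$ for $\theta \in [0,1]^d$ and $C_4(t) = \int_{[0,1]^d} \frac{\sin^2(2\pi\theta^1)}{\omega_\theta^2} \exp(-t\gamma\omega_\theta^2)\, d\theta$. Then there exists a constant $C > 1$ such that for all sufficiently large $t$, $\frac{1}{C} t^{-d/2} \le C_4(t) \le C\, t^{-d/2}$. -/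
/-!
Since `sin² (2x) ≤ 4 sin² x`, the ratio `sin² (2πθ¹) / ω_θ²` is at most `1`, so `C₄(t)` is bounded
by `∫ exp (-tγ ω_θ²)`, which factorises into `d` one-dimensional integrals; by Jordan's inequality
each is dominated by two Gaussians of variance `≍ 1/t`, giving `O(t^{-d/2})`. Conversely, on the
cube `[t^{-1/2}, 2 t^{-1/2}]^d` of volume `t^{-d/2}` both the ratio and `exp (-tγ ω_θ²)` are
bounded below by positive constants depending only on `γ` and `d`.
-/

open Real MeasureTheory Set

theorem sin_sq_two_mul_le (x : ℝ) : sin (2 * x) ^ 2 ≤ 4 * sin x ^ 2 := by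
  rw [sin_two_mul]
  nlinarith [cos_sq_le_one x, sq_nonneg (sin x)]

theorem two_mul_min_le_sin_pi_mul {x : ℝ} (h₀ : 0 ≤ x) (h₁ : x ≤ 1) :
    2 * min x (1 - x) ≤ sin (π * x) := by
  have jordan : ∀ y, 0 ≤ y → y ≤ 1 / 2 → 2 * y ≤ sin (π * y) := fun y hy₀ hy₁ => by
    have := mul_le_sin (x := π * y) (by positivity) (by nlinarith [pi_pos])
    convert this using 1
    field_simp
  rcases le_total x (1 / 2) with h | h
  · exact (mul_le_mul_of_nonneg_left (min_le_left _ _) zero_le_two).trans (jordan x h₀ h)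
  · have hsym : sin (π * x) = sin (π * (1 - x)) := by
      rw [mul_one_sub, sin_pi_sub]
    rw [hsym]
    exact (mul_le_mul_of_nonneg_left (min_le_right _ _) zero_le_two).trans
      (jordan (1 - x) (by linarith) (by linarith))

theorem exp_neg_mul_sin_pi_mul_sq_le {c x : ℝ} (hc : 0 ≤ c) (h₀ : 0 ≤ x) (h₁ : x ≤ 1) :
    exp (-c * sin (π * x) ^ 2) ≤ exp (-(4 * c) * x ^ 2) + exp (-(4 * c) * (x - 1) ^ 2) := by
  have hmin := two_mul_min_le_sin_pi_mul h₀ h₁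
  have hsq : 4 * min x (1 - x) ^ 2 ≤ sin (π * x) ^ 2 := by
    nlinarith [le_min h₀ (sub_nonneg.2 h₁)]
  have key : exp (-c * sin (π * x) ^ 2) ≤ exp (-(4 * c) * min x (1 - x) ^ 2) :=
    exp_le_exp.2 (by nlinarith)
  rcases min_choice x (1 - x) with hm | hm
  · rw [hm] at key
    exact key.trans (le_add_of_nonneg_right (exp_nonneg _))
  · rw [hm, ← neg_sub, neg_sq] at key
    exact key.trans (le_add_of_nonneg_left (exp_nonneg _))

theorem setIntegral_Icc_exp_neg_mul_sin_pi_mul_sq_le {c : ℝ} (hc : 0 < c) :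
    ∫ x in Icc (0 : ℝ) 1, exp (-c * sin (π * x) ^ 2) ≤ √(π / c) := by
  set g : ℝ → ℝ := fun x => exp (-(4 * c) * x ^ 2)
  have hg : Integrable g := integrable_exp_neg_mul_sq (by positivity)
  have hg₁ : Integrable fun x => g (x - 1) := hg.comp_sub_right 1
  calc ∫ x in Icc (0 : ℝ) 1, exp (-c * sin (π * x) ^ 2)
      ≤ ∫ x in Icc (0 : ℝ) 1, (g x + g (x - 1)) :=
        setIntegral_mono_on (Continuous.integrableOn_Icc (by fun_prop))
          (hg.add hg₁).integrableOn measurableSet_Icc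
          fun x hx => exp_neg_mul_sin_pi_mul_sq_le hc.le hx.1 hx.2
    _ ≤ ∫ x, (g x + g (x - 1)) :=
        setIntegral_le_integral (hg.add hg₁) (.of_forall fun x => by positivity)
    _ = 2 * √(π / (4 * c)) := by
        rw [integral_add hg hg₁, integral_sub_right_eq_self g 1, integral_gaussian]
        ring
    _ = √(π / c) := by
        rw [div_mul_eq_div_div_swap, sqrt_div' _ (by norm_num : (0:ℝ) ≤ 4),
          show (4 : ℝ) = 2 ^ 2 by norm_num, sqrt_sq zero_le_two]
        ring

theorem rpow_neg_natCast_div_two {t : ℝ} (ht : 0 ≤ t) (n : ℕ) :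
    t ^ (-(n : ℝ) / 2) = (√t)⁻¹ ^ n := by
  rw [sqrt_eq_rpow, ← rpow_neg ht, ← rpow_natCast, ← rpow_mul ht]
  congr 1
  ring

theorem setIntegral_Icc_pi_prod {ι : Type*} [Fintype ι] (a b : ι → ℝ) (f : ι → ℝ → ℝ) :
    ∫ x in Icc a b, ∏ i, f i (x i) = ∏ i, ∫ y in Icc (a i) (b i), f i y := by
  rw [← pi_univ_Icc, volume_pi, Measure.restrict_pi_pi, integral_fintype_prod_eq_prod]

section LatticeSymbol

variable {ι : Type*} [Fintype ι]

noncomputable def omegaSq (θ : ι → ℝ) : ℝ := 4 * ∑ a, sin (π * θ a) ^ 2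

/-- With `s = tγ` and `i` the first coordinate, this integrates over `[0,1]^d` to `C₄(t)`;
at the zeros of `omegaSq` the division returns the junk value `0`. -/
noncomputable def c4Integrand (s : ℝ) (i : ι) (θ : ι → ℝ) : ℝ :=
  sin (2 * π * θ i) ^ 2 / omegaSq θ * exp (-s * omegaSq θ)

theorem omegaSq_nonneg (θ : ι → ℝ) : 0 ≤ omegaSq θ := by
  unfold omegaSq; positivity

theorem sin_sq_two_pi_mul_le_omegaSq (θ : ι → ℝ) (i : ι) :
    sin (2 * π * θ i) ^ 2 ≤ omegaSq θ := by
  rw [mul_assoc]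
  exact (sin_sq_two_mul_le _).trans <| mul_le_mul_of_nonneg_left
    (Finset.single_le_sum (fun a _ => sq_nonneg (sin (π * θ a))) (Finset.mem_univ i)) (by norm_num)

theorem omegaSq_le (θ : ι → ℝ) : omegaSq θ ≤ 4 * ∑ a, (π * θ a) ^ 2 := by
  unfold omegaSq
  gcongr 4 * ∑ a, ?_ with a
  exact sin_sq_le_sq

theorem exp_neg_mul_omegaSq (s : ℝ) (θ : ι → ℝ) :
    exp (-s * omegaSq θ) = ∏ a, exp (-(4 * s) * sin (π * θ a) ^ 2) := by
  rw [← exp_sum, omegaSq, Finset.mul_sum, Finset.mul_sum]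
  congr 1
  exact Finset.sum_congr rfl fun a _ => by ring

theorem c4Integrand_nonneg (s : ℝ) (i : ι) (θ : ι → ℝ) : 0 ≤ c4Integrand s i θ :=
  mul_nonneg (div_nonneg (sq_nonneg _) (omegaSq_nonneg θ)) (exp_nonneg _)

theorem c4Integrand_le_exp (s : ℝ) (i : ι) (θ : ι → ℝ) :
    c4Integrand s i θ ≤ exp (-s * omegaSq θ) :=
  mul_le_of_le_one_left (exp_nonneg _) (div_le_one_of_le₀ (sin_sq_two_pi_mul_le_omegaSq θ i)
    (omegaSq_nonneg θ))

theorem integrableOn_c4Integrand {s : ℝ} (hs : 0 ≤ s) (i : ι) :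
    IntegrableOn (c4Integrand s i) (Icc 0 1) := by
  refine .of_bound measure_Icc_lt_top (Measurable.aestronglyMeasurable ?_) 1
    (.of_forall fun θ => ?_)
  · unfold c4Integrand omegaSq; fun_prop
  · rw [norm_of_nonneg (c4Integrand_nonneg s i θ)]
    exact (c4Integrand_le_exp s i θ).trans
      (exp_le_one_iff.2 (by nlinarith [omegaSq_nonneg θ]))

theorem setIntegral_exp_neg_mul_omegaSq_le {s : ℝ} (hs : 0 < s) :
    ∫ θ in Icc (0 : ι → ℝ) 1, exp (-s * omegaSq θ) ≤ √(π / (4 * s)) ^ Fintype.card ι := by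
  simp_rw [exp_neg_mul_omegaSq]
  rw [setIntegral_Icc_pi_prod 0 1 fun _ x => exp (-(4 * s) * sin (π * x) ^ 2),
    ← Finset.card_univ, ← Finset.prod_const]
  exact Finset.prod_le_prod
    (fun _ _ => setIntegral_nonneg measurableSet_Icc fun _ _ => exp_nonneg _)
    fun _ _ => setIntegral_Icc_exp_neg_mul_sin_pi_mul_sq_le (by positivity)

theorem setIntegral_c4Integrand_le {γ t : ℝ} (hγ : 0 < γ) (ht : 0 < t) (i : ι) :
    ∫ θ in Icc 0 1, c4Integrand (t * γ) i θ
      ≤ √(π / (4 * γ)) ^ Fintype.card ι * t ^ (-(Fintype.card ι : ℝ) / 2) := by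
  calc ∫ θ in Icc 0 1, c4Integrand (t * γ) i θ
      ≤ ∫ θ in Icc (0 : ι → ℝ) 1, exp (-(t * γ) * omegaSq θ) :=
        setIntegral_mono_on (integrableOn_c4Integrand (by positivity) i)
          (Continuous.integrableOn_Icc (by unfold omegaSq; fun_prop)) measurableSet_Icc
          fun θ _ => c4Integrand_le_exp _ i θ
    _ ≤ √(π / (4 * (t * γ))) ^ Fintype.card ι :=
        setIntegral_exp_neg_mul_omegaSq_le (by positivity)
    _ = √(π / (4 * γ)) ^ Fintype.card ι * t ^ (-(Fintype.card ι : ℝ) / 2) := by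
        rw [rpow_neg_natCast_div_two ht.le, ← mul_pow, ← sqrt_inv, ← sqrt_mul' _ (by positivity)]
        field_simp

theorem exp_div_le_c4Integrand {s r : ℝ} (hs : 0 ≤ s) (hr : 0 < r) (hr' : r ≤ 1 / 8) (i : ι)
    {θ : ι → ℝ} (hθ : θ ∈ Icc (fun _ => r) (fun _ => 2 * r)) :
    exp (-(16 * s * π ^ 2 * Fintype.card ι * r ^ 2)) / (π ^ 2 * Fintype.card ι)
      ≤ c4Integrand s i θ := by
  have hn : (0 : ℝ) < Fintype.card ι := by
    have : Nonempty ι := ⟨i⟩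
    exact_mod_cast Fintype.card_pos
  have hsin : 4 * r ≤ sin (2 * π * θ i) := by
    have := mul_le_sin (x := 2 * π * θ i) (by nlinarith [hθ.1 i, pi_pos])
      (by nlinarith [hθ.2 i, pi_pos])
    calc 4 * r ≤ 2 / π * (2 * π * θ i) := by field_simp; linarith [hθ.1 i]
      _ ≤ _ := this
  have hω : omegaSq θ ≤ 16 * π ^ 2 * Fintype.card ι * r ^ 2 := by
    refine (omegaSq_le θ).trans ?_
    calc 4 * ∑ a, (π * θ a) ^ 2 ≤ 4 * ∑ _a : ι, (π * (2 * r)) ^ 2 := by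
          gcongr with a
          · nlinarith [hθ.1 a, pi_pos]
          · exact hθ.2 a
      _ = 16 * π ^ 2 * Fintype.card ι * r ^ 2 := by
          rw [Finset.sum_const, Finset.card_univ, nsmul_eq_mul]; ring
  have hsin_sq : 16 * r ^ 2 ≤ sin (2 * π * θ i) ^ 2 := by nlinarith
  have hω_pos : 0 < omegaSq θ :=
    (by positivity : 0 < 16 * r ^ 2).trans_le (hsin_sq.trans (sin_sq_two_pi_mul_le_omegaSq θ i))
  have hratio : 1 / (π ^ 2 * Fintype.card ι) ≤ sin (2 * π * θ i) ^ 2 / omegaSq θ := by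
    rw [div_le_div_iff₀ (by positivity) hω_pos]
    nlinarith [mul_le_mul_of_nonneg_right hsin_sq (by positivity : 0 ≤ π ^ 2 * Fintype.card ι)]
  have hexp : exp (-(16 * s * π ^ 2 * Fintype.card ι * r ^ 2)) ≤ exp (-s * omegaSq θ) :=
    exp_le_exp.2 (by nlinarith)
  calc exp (-(16 * s * π ^ 2 * Fintype.card ι * r ^ 2)) / (π ^ 2 * Fintype.card ι)
      = 1 / (π ^ 2 * Fintype.card ι) * exp (-(16 * s * π ^ 2 * Fintype.card ι * r ^ 2)) := by ring
    _ ≤ c4Integrand s i θ :=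
        mul_le_mul hratio hexp (exp_nonneg _) (div_nonneg (sq_nonneg _) hω_pos.le)

theorem exp_div_mul_pow_le_setIntegral_c4Integrand {s r : ℝ} (hs : 0 ≤ s) (hr : 0 < r)
    (hr' : r ≤ 1 / 8) (i : ι) :
    exp (-(16 * s * π ^ 2 * Fintype.card ι * r ^ 2)) / (π ^ 2 * Fintype.card ι) * r ^ Fintype.card ι
      ≤ ∫ θ in Icc 0 1, c4Integrand s i θ := by
  set box : Set (ι → ℝ) := Icc (fun _ => r) (fun _ => 2 * r)
  have hbox : box ⊆ Icc 0 1 :=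
    Icc_subset_Icc (fun _ => hr.le) (fun _ => show 2 * r ≤ 1 by linarith)
  have hvol : volume.real box = r ^ Fintype.card ι := by
    rw [measureReal_def, volume_Icc_pi_toReal fun _ => by linarith, Finset.prod_const,
      Finset.card_univ]
    ring
  calc _ = exp (-(16 * s * π ^ 2 * Fintype.card ι * r ^ 2)) / (π ^ 2 * Fintype.card ι)
        * volume.real box := by rw [hvol]
    _ ≤ ∫ θ in box, c4Integrand s i θ :=
        setIntegral_ge_of_const_le_real measurableSet_Icc measure_Icc_lt_top.ne
          (fun _ hθ => exp_div_le_c4Integrand hs hr hr' i hθ)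
          ((integrableOn_c4Integrand hs i).mono_set hbox)
    _ ≤ ∫ θ in Icc 0 1, c4Integrand s i θ :=
        setIntegral_mono_set (integrableOn_c4Integrand hs i)
          (.of_forall (c4Integrand_nonneg s i)) hbox.eventuallyLE

theorem le_setIntegral_c4Integrand {γ t : ℝ} (hγ : 0 ≤ γ) (ht : 64 ≤ t) (i : ι) :
    exp (-(16 * γ * π ^ 2 * Fintype.card ι)) / (π ^ 2 * Fintype.card ι)
        * t ^ (-(Fintype.card ι : ℝ) / 2)
      ≤ ∫ θ in Icc 0 1, c4Integrand (t * γ) i θ := by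
  have ht₀ : 0 < t := by linarith
  have hr : (√t)⁻¹ ≤ 1 / 8 := by
    rw [one_div, inv_le_inv₀ (sqrt_pos.2 ht₀) (by norm_num), le_sqrt (by norm_num) ht₀.le]
    linarith
  have harg : 16 * (t * γ) * π ^ 2 * Fintype.card ι * (√t)⁻¹ ^ 2
      = 16 * γ * π ^ 2 * Fintype.card ι := by
    rw [inv_pow, sq_sqrt ht₀.le]
    field_simp
  have := exp_div_mul_pow_le_setIntegral_c4Integrand (s := t * γ) (by positivity)
    (inv_pos.2 (sqrt_pos.2 ht₀)) hr i
  rwa [harg, ← rpow_neg_natCast_div_two ht₀.le] at this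

end LatticeSymbol

/-- the term C₄(t) behaves as t^{-d/2} as t → ∞. -/
theorem stmt2 (γ : ℝ) (hγ : 0 < γ) (d : ℕ) (hd : 1 ≤ d) :
    ∃ C : ℝ, 1 < C ∧ ∃ T : ℝ, ∀ t : ℝ, T ≤ t →
      (1/C) * t ^ (-(d:ℝ)/2) ≤
        (∫ θ in Set.Icc (0 : Fin d → ℝ) 1,
          Real.sin (2*π*(θ ⟨0, hd⟩))^2 / (4*∑ a, Real.sin (π * θ a)^2) *
            Real.exp (-(t*γ)*(4*∑ a, Real.sin (π * θ a)^2)))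
      ∧ (∫ θ in Set.Icc (0 : Fin d → ℝ) 1,
          Real.sin (2*π*(θ ⟨0, hd⟩))^2 / (4*∑ a, Real.sin (π * θ a)^2) *
            Real.exp (-(t*γ)*(4*∑ a, Real.sin (π * θ a)^2)))
        ≤ C * t ^ (-(d:ℝ)/2) := by
  set A := √(π / (4 * γ)) ^ d
  set B := exp (-(16 * γ * π ^ 2 * d)) / (π ^ 2 * d)
  have hB : 0 < B := by
    have : (0 : ℝ) < d := by exact_mod_cast hd
    positivity
  refine ⟨max A B⁻¹ + 1, by linarith [le_max_right A B⁻¹, inv_pos.2 hB], 64, fun t ht => ⟨?_, ?_⟩⟩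
  · calc 1 / (max A B⁻¹ + 1) * t ^ (-(d : ℝ) / 2) ≤ B * t ^ (-(d : ℝ) / 2) := by
          gcongr
          rw [one_div]
          exact inv_le_of_inv_le₀ hB (by linarith [le_max_right A B⁻¹])
      _ ≤ _ := by
          have := le_setIntegral_c4Integrand (ι := Fin d) hγ.le ht ⟨0, hd⟩
          rw [Fintype.card_fin] at this
          exact this
  · calc _ ≤ A * t ^ (-(d : ℝ) / 2) := by
          have := setIntegral_c4Integrand_le (ι := Fin d) hγ (by linarith) ⟨0, hd⟩
          rw [Fintype.card_fin] at this
          exact this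
      _ ≤ (max A B⁻¹ + 1) * t ^ (-(d : ℝ) / 2) := by
          gcongr
          linarith [le_max_left A B⁻¹]
end

section
/- Fix $\gamma > 0$, $B \neq 0$. With $\omega_\theta^2 = 4\sin^2(\pi\theta)$ for $\theta \in [0,1]$ ($d=1$) and $\alpha_2(\theta)$ as in the factorization of $Q$, define $C_3(t) = \int_{[0,1]} \frac{\sin^2(2\pi\theta)}{\omega_\theta^2} \beta_2(\theta) \exp\big(-(\gamma\omega_\theta^2 - \alpha_2(\theta))t\big)\,d\theta$, where $\beta_2(\theta) = \frac{\alpha_1(\theta)^2 - B^2}{2(\alpha_1(\theta)^2 + \alpha_2(\theta)^2)}$ and $\alpha_1(\theta)^2, \alpha_2(\theta)^2$ are the nonnegative solutions of $\alpha_1^2 - \alpha_2^2 = B^2 - \gamma^2\omega_\theta^4 + 4\omega_\theta^2$, $\alpha_1^2\alpha_2^2 = \gamma^2 B^2 \omega_\theta^4$. Then $C_3(t) \sim t^{-3/4}$ as $t \to \infty$, in the sense that there exists $C>1$ with $\tfrac{1}{C} t^{-3/4} \le C_3(t) \le C t^{-3/4}$ for all large $t$. -/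
open Real MeasureTheory

set_option maxHeartbeats 2000000 in
lemma ptwise (γ B : ℝ) (hγ : 0 < γ) (hB : B ≠ 0) (w : ℝ) (hw0 : 0 ≤ w) (hw4 : w ≤ 4)
    (S D a1sq a2sq a2 b2 K1 : ℝ)
    (hS : S = B^2 - γ^2*w^2 + 4*w)
    (hD : D = Real.sqrt (S^2 + 4*γ^2*B^2*w^2))
    (h1 : a1sq = (S + D)/2) (h2 : a2sq = (-S + D)/2)
    (ha2 : a2 = Real.sqrt a2sq)
    (hb2 : b2 = (a1sq - B^2)/(2*(a1sq + a2sq)))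
    (hK1 : K1 = B^2 + 16*γ^2 + 16 + 8*γ*|B|) :
    (2*B^2/((16*γ^2+B^2)*K1)) * w ≤ b2 ∧ b2 ≤ (2/B^2) * w ∧
    (2*γ/(16*γ^2+K1)) * w^2 ≤ γ*w - a2 ∧ γ*w - a2 ≤ (4*γ/B^2) * w^2 ∧ B^2 ≤ D := by
  have hB2 : 0 < B^2 := by positivity
  have harg : 0 ≤ S^2 + 4*γ^2*B^2*w^2 := by positivity
  have hD0 : 0 ≤ D := hD ▸ Real.sqrt_nonneg _
  have hD2 : D^2 = S^2 + 4*γ^2*B^2*w^2 := by rw [hD]; exact Real.sq_sqrt harg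
  have hSD : |S| ≤ D := by
    rw [hD, ← Real.sqrt_sq_eq_abs]
    exact Real.sqrt_le_sqrt (le_add_of_nonneg_right (by positivity))
  have hSD' : S ≤ D := (le_abs_self S).trans hSD
  have hSD'' : -D ≤ S := le_trans (neg_le_neg hSD) (neg_abs_le S)
  have ha2sq0 : 0 ≤ a2sq := by rw [h2]; linarith
  have ha1sq0 : 0 ≤ a1sq := by rw [h1]; linarith
  have hsum : a1sq + a2sq = D := by rw [h1, h2]; ring
  have hprod : a1sq * a2sq = γ^2*B^2*w^2 := by
    rw [h1, h2]; linear_combination hD2/4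
  have key1 : (a1sq - B^2)*(a2sq + B^2) = 4*w*B^2 := by
    have hd : a1sq - a2sq = S := by rw [h1, h2]; ring
    linear_combination hprod + B^2*hd + B^2*hS
  have ha2B : 0 < a2sq + B^2 := by positivity
  have ha1B : B^2 ≤ a1sq := by nlinarith [key1, ha2B]
  have hDlb : B^2 ≤ D := by rw [← hsum]; linarith
  have key2 : (γ^2*w^2 - a2sq)*(γ^2*w^2 + a1sq) = 4*γ^2*w^3 := by
    have hd : a1sq - a2sq = S := by rw [h1, h2]; ring
    linear_combination (γ^2*w^2)*hd + (γ^2*w^2)*hS - hprod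
  have ha2γsq : a2sq ≤ γ^2*w^2 := by nlinarith [key2, ha1B, hB2, sq_nonneg w]
  have ha20 : 0 ≤ a2 := ha2 ▸ Real.sqrt_nonneg _
  have ha2sqeq : a2^2 = a2sq := by rw [ha2]; exact Real.sq_sqrt ha2sq0
  have ha2le : a2 ≤ γ*w := by
    rw [ha2]
    calc Real.sqrt a2sq ≤ Real.sqrt (γ^2*w^2) := Real.sqrt_le_sqrt ha2γsq
      _ = γ*w := by rw [show γ^2*w^2 = (γ*w)^2 by ring, Real.sqrt_sq (by positivity)]
  have hK1pos : 0 < K1 := by rw [hK1]; positivity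
  have hDK : D ≤ K1 := by
    have hab : |S| ≤ B^2+γ^2*w^2+4*w := by
      rw [hS, abs_le]
      refine ⟨by nlinarith [sq_nonneg (γ*w), hB2], by nlinarith [sq_nonneg (γ*w)]⟩
    have habs : S^2 ≤ (B^2+γ^2*w^2+4*w)^2 := by nlinarith [abs_nonneg S, sq_abs S]
    have hM : D ≤ (B^2+γ^2*w^2+4*w) + 2*γ*(abs B)*w := by
      have h0 : (0:ℝ) ≤ (B^2+γ^2*w^2+4*w) + 2*γ*(abs B)*w := by positivity
      have hP0 : (0:ℝ) ≤ B^2+γ^2*w^2+4*w := by positivity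
      have hle : S^2 + 4*γ^2*B^2*w^2 ≤ ((B^2+γ^2*w^2+4*w) + 2*γ*(abs B)*w)^2 := by
        nlinarith [habs, sq_abs B,
          mul_nonneg (mul_nonneg (mul_nonneg (by linarith : (0:ℝ) ≤ 4*γ) (abs_nonneg B)) hw0) hP0]
      have := Real.sqrt_le_sqrt hle
      rwa [Real.sqrt_sq h0, ← hD] at this
    have hw16 : w^2 ≤ 16 := by nlinarith
    have t1 : γ^2*w^2 ≤ γ^2*16 := mul_le_mul_of_nonneg_left hw16 (sq_nonneg γ)
    have t2 : (γ*|B|)*w ≤ (γ*|B|)*4 :=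
      mul_le_mul_of_nonneg_left hw4 (mul_nonneg hγ.le (abs_nonneg B))
    rw [hK1]; linarith
  -- auxiliary facts
  have ha1D : a1sq ≤ D := by rw [← hsum]; linarith
  have hstep : a1sq - B^2 ≤ 4*w := by
    nlinarith [key1, mul_nonneg (sub_nonneg.2 ha1B) ha2sq0, hB2]
  have h2D : (0:ℝ) < 2*D := by linarith
  have hbii : b2 ≤ (2/B^2) * w := by
    rw [hb2, hsum, show (2/B^2)*w = 2*w/B^2 by ring,
      div_le_div_iff₀ h2D hB2]
    nlinarith [key1, mul_nonneg (sub_nonneg.2 ha1B) ha2sq0,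
      mul_le_mul_of_nonneg_left hDlb hw0]
  have h16B : (0:ℝ) < (16*γ^2+B^2)*K1 := by positivity
  have ha2sq16 : a2sq ≤ 16*γ^2 := by
    have hw16 : w^2 ≤ 16 := by nlinarith
    nlinarith [ha2γsq, mul_le_mul_of_nonneg_left hw16 (sq_nonneg γ)]
  have hbi : (2*B^2/((16*γ^2+B^2)*K1)) * w ≤ b2 := by
    rw [hb2, hsum, show (2*B^2/((16*γ^2+B^2)*K1))*w = 2*B^2*w/((16*γ^2+B^2)*K1) by ring,
      div_le_div_iff₀ h16B h2D]
    have e1 : (a1sq-B^2)*(a2sq+B^2) ≤ (a1sq-B^2)*(16*γ^2+B^2) := by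
      nlinarith [sub_nonneg.2 ha1B, ha2sq16]
    have e2 : 4*w*B^2 ≤ (a1sq-B^2)*(16*γ^2+B^2) := by linarith [e1, key1.symm.le]
    have e3 : (4*w*B^2)*D ≤ ((a1sq-B^2)*(16*γ^2+B^2))*K1 :=
      mul_le_mul e2 hDK hD0 (mul_nonneg (sub_nonneg.2 ha1B) (by positivity))
    linarith [e3]
  have m1 : (γ*w - a2)*(γ*w + a2) = γ^2*w^2 - a2sq := by
    rw [← ha2sqeq]; ring
  have hbiv : γ*w - a2 ≤ (4*γ/B^2) * w^2 := by
    rcases eq_or_lt_of_le hw0 with h0|hwpos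
    · have hw : w = 0 := h0.symm
      subst hw
      have : (4*γ/B^2) * 0^2 = 0 := by ring
      rw [this]; linarith
    · rw [show (4*γ/B^2)*w^2 = 4*γ*w^2/B^2 by ring, le_div_iff₀ hB2]
      have h4 : 0 ≤ (γ^2*w^2 - a2sq)*(γ^2*w^2 + a1sq - B^2) :=
        mul_nonneg (sub_nonneg.2 ha2γsq) (by linarith [ha1B, sq_nonneg (γ*w)])
      have m2 : (γ^2*w^2 - a2sq)*B^2 ≤ 4*γ^2*w^3 := by linarith [key2, h4]
      have m3 : (γ*w - a2)*(γ*w)*B^2 ≤ (γ^2*w^2 - a2sq)*B^2 := by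
        rw [← ha2sqeq]
        linarith [mul_nonneg (mul_nonneg (sub_nonneg.2 ha2le) ha20) hB2.le]
      have hgw : (0:ℝ) < γ*w := by positivity
      have final : ((γ*w - a2)*B^2)*(γ*w) ≤ (4*γ*w^2)*(γ*w) := by linarith [m2, m3]
      exact le_of_mul_le_mul_right final hgw
  have hbiii : (2*γ/(16*γ^2+K1)) * w^2 ≤ γ*w - a2 := by
    have hQ : (0:ℝ) < 16*γ^2 + K1 := by positivity
    rcases eq_or_lt_of_le hw0 with h0|hwpos
    · have hw : w = 0 := h0.symm
      subst hw
      have ha2eq : a2 = 0 := le_antisymm (by simpa using ha2le) ha20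
      rw [ha2eq]
      have : (2*γ/(16*γ^2+K1)) * 0^2 = 0 := by ring
      rw [this]; simp
    · rw [show (2*γ/(16*γ^2+K1))*w^2 = 2*γ*w^2/(16*γ^2+K1) by ring, div_le_iff₀ hQ]
      have hge : 0 ≤ γ*w - a2 := by linarith
      have n1 : γ^2*w^2 + a1sq ≤ 16*γ^2 + K1 := by
        have hw16 : w^2 ≤ 16 := by nlinarith
        have t1 : γ^2*w^2 ≤ γ^2*16 := mul_le_mul_of_nonneg_left hw16 (sq_nonneg γ)
        linarith [ha1D, hDK]
      have n2 : γ*w + a2 ≤ 2*(γ*w) := by linarith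
      have p1 : (γ*w-a2)*((γ*w+a2)*(γ^2*w^2+a1sq)) = 4*γ^2*w^3 := by
        linear_combination key2 - (γ^2*w^2+a1sq)*ha2sqeq
      have p2 : (γ*w+a2)*(γ^2*w^2+a1sq) ≤ (2*(γ*w))*(16*γ^2+K1) := by
        apply mul_le_mul n2 n1 (by positivity) (by positivity)
      have p3 : 4*γ^2*w^3 ≤ (γ*w-a2)*((2*(γ*w))*(16*γ^2+K1)) := by
        rw [← p1]; exact mul_le_mul_of_nonneg_left p2 hge
      have hgw : (0:ℝ) < 2*(γ*w) := by positivity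
      have final : (2*γ*w^2)*(2*(γ*w)) ≤ ((γ*w-a2)*(16*γ^2+K1))*(2*(γ*w)) := by
        linarith [p3]
      exact le_of_mul_le_mul_right final hgw
  exact ⟨hbi, hbii, hbiii, hbiv, hDlb⟩

noncomputable def wA (θ : ℝ) : ℝ := 4 * Real.sin (π * θ)^2
noncomputable def SA (γ B θ : ℝ) : ℝ := B^2 - γ^2*(wA θ)^2 + 4*(wA θ)
noncomputable def DA (γ B θ : ℝ) : ℝ := Real.sqrt ((SA γ B θ)^2 + 4*γ^2*B^2*(wA θ)^2)
noncomputable def a1A (γ B θ : ℝ) : ℝ := (SA γ B θ + DA γ B θ)/2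
noncomputable def a2sqA (γ B θ : ℝ) : ℝ := (-SA γ B θ + DA γ B θ)/2
noncomputable def a2A (γ B θ : ℝ) : ℝ := Real.sqrt (a2sqA γ B θ)
noncomputable def b2A (γ B θ : ℝ) : ℝ := (a1A γ B θ - B^2)/(2*(a1A γ B θ + a2sqA γ B θ))
noncomputable def GA (γ B t θ : ℝ) : ℝ :=
  Real.cos (π*θ)^2 * b2A γ B θ * Real.exp (-(γ * wA θ - a2A γ B θ)*t)

lemma wA_nonneg (θ : ℝ) : 0 ≤ wA θ := by unfold wA; positivity

lemma wA_le_four (θ : ℝ) : wA θ ≤ 4 := by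
  unfold wA; nlinarith [Real.sin_sq_le_one (π*θ)]

lemma ptwiseA (γ B : ℝ) (hγ : 0 < γ) (hB : B ≠ 0) (θ : ℝ) :
    (2*B^2/((16*γ^2+B^2)*(B^2 + 16*γ^2 + 16 + 8*γ*|B|))) * wA θ ≤ b2A γ B θ ∧
    b2A γ B θ ≤ (2/B^2) * wA θ ∧
    (2*γ/(16*γ^2+(B^2 + 16*γ^2 + 16 + 8*γ*|B|))) * (wA θ)^2 ≤ γ*(wA θ) - a2A γ B θ ∧
    γ*(wA θ) - a2A γ B θ ≤ (4*γ/B^2) * (wA θ)^2 ∧ B^2 ≤ DA γ B θ :=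
  ptwise γ B hγ hB (wA θ) (wA_nonneg θ) (wA_le_four θ) (SA γ B θ) (DA γ B θ)
    (a1A γ B θ) (a2sqA γ B θ) (a2A γ B θ) (b2A γ B θ) _
    rfl rfl rfl rfl rfl rfl rfl

lemma contA (γ B : ℝ) (hγ : 0 < γ) (hB : B ≠ 0) (t : ℝ) : Continuous (GA γ B t) := by
  have hw : Continuous wA := by unfold wA; fun_prop
  have hS : Continuous (SA γ B) := by unfold SA; fun_prop
  have hD : Continuous (DA γ B) := by unfold DA; fun_prop
  have ha1 : Continuous (a1A γ B) := by unfold a1A; fun_prop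
  have ha2sq : Continuous (a2sqA γ B) := by unfold a2sqA; fun_prop
  have ha2 : Continuous (a2A γ B) := by unfold a2A; fun_prop
  have hne : ∀ θ : ℝ, 2*(a1A γ B θ + a2sqA γ B θ) ≠ 0 := by
    intro θ
    have hsum : a1A γ B θ + a2sqA γ B θ = DA γ B θ := by unfold a1A a2sqA; ring
    have hDlb := (ptwiseA γ B hγ hB θ).2.2.2.2
    have hB2 : (0:ℝ) < B^2 := by positivity
    rw [hsum]; intro h; nlinarith
  have hb2 : Continuous (b2A γ B) := by
    unfold b2A
    exact (ha1.sub continuous_const).div (by fun_prop) hne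
  unfold GA; fun_prop

lemma GA_symm (γ B t θ : ℝ) : GA γ B t (1-θ) = GA γ B t θ := by
  have hw : wA (1-θ) = wA θ := by
    unfold wA
    rw [show π*(1-θ) = π - π*θ by ring, Real.sin_pi_sub]
  have hc : Real.cos (π*(1-θ))^2 = Real.cos (π*θ)^2 := by
    rw [show π*(1-θ) = π - π*θ by ring, Real.cos_pi_sub]; ring
  have hDs : DA γ B (1-θ) = DA γ B θ := by unfold DA SA; rw [hw]
  have ha2sqs : a2sqA γ B (1-θ) = a2sqA γ B θ := by unfold a2sqA SA; rw [hw, hDs]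
  have ha1s : a1A γ B (1-θ) = a1A γ B θ := by unfold a1A SA; rw [hw, hDs]
  have hb2s : b2A γ B (1-θ) = b2A γ B θ := by unfold b2A; rw [ha1s, ha2sqs]
  have ha2s : a2A γ B (1-θ) = a2A γ B θ := by unfold a2A; rw [ha2sqs]
  unfold GA
  rw [hw, hc, hb2s, ha2s]

lemma GA_nonneg (γ B : ℝ) (hγ : 0 < γ) (hB : B ≠ 0) (t θ : ℝ) : 0 ≤ GA γ B t θ := by
  obtain ⟨hbi, -, -, -, -⟩ := ptwiseA γ B hγ hB θ
  have hb2 : 0 ≤ b2A γ B θ :=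
    le_trans (mul_nonneg (by positivity) (wA_nonneg θ)) hbi
  exact mul_nonneg (mul_nonneg (sq_nonneg _) hb2) (Real.exp_nonneg _)

lemma GA_le (γ B : ℝ) (hγ : 0 < γ) (hB : B ≠ 0) (t θ : ℝ) (ht : 0 ≤ t) :
    GA γ B t θ ≤ (2/B^2) * wA θ *
      Real.exp (-((2*γ/(16*γ^2+(B^2 + 16*γ^2 + 16 + 8*γ*|B|))) * (wA θ)^2)*t) := by
  obtain ⟨hbi, hbii, hbiii, -, -⟩ := ptwiseA γ B hγ hB θ
  have hb2 : 0 ≤ b2A γ B θ :=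
    le_trans (mul_nonneg (by positivity) (wA_nonneg θ)) hbi
  have e1 : Real.exp (-(γ * wA θ - a2A γ B θ)*t)
      ≤ Real.exp (-((2*γ/(16*γ^2+(B^2 + 16*γ^2 + 16 + 8*γ*|B|))) * (wA θ)^2)*t) := by
    apply Real.exp_le_exp.2
    have := mul_le_mul_of_nonneg_right hbiii ht
    nlinarith [this]
  have hcos : Real.cos (π*θ)^2 ≤ 1 := Real.cos_sq_le_one _
  calc GA γ B t θ = Real.cos (π*θ)^2 * b2A γ B θ * Real.exp (-(γ * wA θ - a2A γ B θ)*t) := rfl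
    _ ≤ 1 * b2A γ B θ * Real.exp (-(γ * wA θ - a2A γ B θ)*t) := by
        apply mul_le_mul_of_nonneg_right _ (Real.exp_nonneg _)
        exact mul_le_mul_of_nonneg_right hcos hb2
    _ = b2A γ B θ * Real.exp (-(γ * wA θ - a2A γ B θ)*t) := by ring
    _ ≤ (2/B^2) * wA θ * Real.exp (-((2*γ/(16*γ^2+(B^2 + 16*γ^2 + 16 + 8*γ*|B|))) * (wA θ)^2)*t) := by
        exact mul_le_mul hbii e1 (Real.exp_nonneg _)
          (mul_nonneg (by positivity) (wA_nonneg θ))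

lemma GA_ge (γ B : ℝ) (hγ : 0 < γ) (hB : B ≠ 0) (t θ : ℝ) (ht : 0 ≤ t) :
    (2*B^2/((16*γ^2+B^2)*(B^2 + 16*γ^2 + 16 + 8*γ*|B|))) * Real.cos (π*θ)^2 * wA θ *
      Real.exp (-((4*γ/B^2) * (wA θ)^2)*t) ≤ GA γ B t θ := by
  obtain ⟨hbi, -, -, hbiv, -⟩ := ptwiseA γ B hγ hB θ
  have e1 : Real.exp (-((4*γ/B^2) * (wA θ)^2)*t) ≤ Real.exp (-(γ * wA θ - a2A γ B θ)*t) := by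
    apply Real.exp_le_exp.2
    have := mul_le_mul_of_nonneg_right hbiv ht
    nlinarith [this]
  have hb2 : 0 ≤ b2A γ B θ :=
    le_trans (mul_nonneg (by positivity) (wA_nonneg θ)) hbi
  calc (2*B^2/((16*γ^2+B^2)*(B^2 + 16*γ^2 + 16 + 8*γ*|B|))) * Real.cos (π*θ)^2 * wA θ *
      Real.exp (-((4*γ/B^2) * (wA θ)^2)*t)
      = Real.cos (π*θ)^2 * ((2*B^2/((16*γ^2+B^2)*(B^2 + 16*γ^2 + 16 + 8*γ*|B|))) * wA θ) *
        Real.exp (-((4*γ/B^2) * (wA θ)^2)*t) := by ring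
    _ ≤ Real.cos (π*θ)^2 * b2A γ B θ * Real.exp (-(γ * wA θ - a2A γ B θ)*t) := by
        apply mul_le_mul _ e1 (Real.exp_nonneg _) _
        · exact mul_le_mul_of_nonneg_left hbi (sq_nonneg _)
        · exact mul_nonneg (sq_nonneg _) hb2
    _ = GA γ B t θ := rfl

lemma C3eqA (γ B t : ℝ) :
    (∫ θ in Set.Icc (0:ℝ) 1, Real.sin (2*π*θ)^2/(wA θ) * b2A γ B θ *
      Real.exp (-(γ * wA θ - a2A γ B θ)*t))
    = ∫ θ in Set.Icc (0:ℝ) 1, GA γ B t θ := by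
  rw [MeasureTheory.integral_Icc_eq_integral_Ioo, MeasureTheory.integral_Icc_eq_integral_Ioo]
  apply MeasureTheory.setIntegral_congr_fun measurableSet_Ioo
  intro θ hθ
  obtain ⟨h0, h1⟩ := hθ
  have hsin : 0 < Real.sin (π*θ) := by
    apply Real.sin_pos_of_pos_of_lt_pi (by positivity)
    calc π*θ < π*1 := by nlinarith [Real.pi_pos]
      _ = π := by ring
  have hwne : wA θ ≠ 0 := by unfold wA; positivity
  show Real.sin (2*π*θ)^2/(wA θ) * b2A γ B θ * Real.exp (-(γ * wA θ - a2A γ B θ)*t) = GA γ B t θ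
  unfold GA
  congr 1
  congr 1
  rw [show 2*π*θ = 2*(π*θ) by ring, Real.sin_two_mul]
  unfold wA at hwne ⊢
  field_simp
  ring

lemma exp_neg_le_inv {y : ℝ} (hy : 0 < y) : Real.exp (-y) ≤ 1/y := by
  rw [Real.exp_neg]
  rw [one_div]
  apply inv_anti₀ hy
  linarith [Real.add_one_le_exp y]

set_option maxHeartbeats 1000000 in
lemma integral_bounds (γ B : ℝ) (hγ : 0 < γ) (hB : B ≠ 0)
    (c1 c2 c3 c4 : ℝ) (hc1 : 0 < c1) (hc2 : 0 < c2) (hc3 : 0 < c3) (hc4 : 0 < c4)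
    (hle : ∀ t θ : ℝ, 0 ≤ t → GA γ B t θ ≤ c4 * wA θ * Real.exp (-(c1*(wA θ)^2)*t))
    (hge : ∀ t θ : ℝ, 0 ≤ t →
      c3 * Real.cos (π*θ)^2 * wA θ * Real.exp (-(c2*(wA θ)^2)*t) ≤ GA γ B t θ) :
    ∃ C : ℝ, 1 < C ∧ ∃ T : ℝ, ∀ t : ℝ, T ≤ t →
      (1/C) * t ^ (-(3:ℝ)/4) ≤ (∫ θ in Set.Icc (0:ℝ) 1, GA γ B t θ) ∧
      (∫ θ in Set.Icc (0:ℝ) 1, GA γ B t θ) ≤ C * t ^ (-(3:ℝ)/4) := by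
  set c5 : ℝ := 4*c3*Real.exp (-(16*π^4*c2)) with hc5def
  have hc5 : 0 < c5 := by rw [hc5def]; positivity
  clear_value c5
  set A : ℝ := 4*π^2*c4 with hAdef
  have hA : 0 < A := by rw [hAdef]; positivity
  clear_value A
  set a : ℝ := 256*c1 with hadef
  have ha : 0 < a := by rw [hadef]; positivity
  clear_value a
  refine ⟨max (2*(A/3 + A/a) + 2) (3/(2*c5) + 2), ?_, 256, ?_⟩
  · have h0 : (0:ℝ) ≤ A/3 + A/a := by positivity
    have : (2:ℝ) ≤ 2*(A/3 + A/a) + 2 := by linarith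
    calc (1:ℝ) < 2 := one_lt_two
      _ ≤ 2*(A/3 + A/a) + 2 := this
      _ ≤ _ := le_max_left _ _
  intro t ht
  have ht0 : (0:ℝ) < t := lt_of_lt_of_le (by norm_num) ht
  have htnn : (0:ℝ) ≤ t := ht0.le
  set r : ℝ := t ^ (-(1/4 : ℝ)) with hrdef
  have hr0 : 0 < r := Real.rpow_pos_of_pos ht0 _
  have hr4 : r^4 = t⁻¹ := by
    rw [hrdef, ← Real.rpow_natCast (t ^ (-(1/4:ℝ))) 4, ← Real.rpow_mul htnn,
      show (-(1/4:ℝ))*(4:ℕ) = -1 by norm_num, Real.rpow_neg_one]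
  have hr4t : r^4 * t = 1 := by rw [hr4]; field_simp
  have hr3 : r^3 = t ^ (-(3:ℝ)/4) := by
    rw [hrdef, ← Real.rpow_natCast (t ^ (-(1/4:ℝ))) 3, ← Real.rpow_mul htnn]
    norm_num
  have hrle : r ≤ 1/4 := by
    have h44 : r^4 ≤ (1/4:ℝ)^4 := by
      rw [hr4, show ((1:ℝ)/4)^4 = (256:ℝ)⁻¹ by norm_num]
      exact inv_anti₀ (by norm_num) ht
    exact le_of_pow_le_pow_left₀ (by norm_num) (by norm_num) h44
  have hr12 : r ≤ 1/2 := hrle.trans (by norm_num)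
  have htr : 1/(t*r) = r^3 := by
    rw [eq_comm, eq_div_iff (by positivity)]
    nlinarith [hr4t]
  clear_value r
  -- integral data
  have hGc : Continuous (GA γ B t) := contA γ B hγ hB t
  have hIcc : (∫ θ in Set.Icc (0:ℝ) 1, GA γ B t θ) = ∫ θ in (0:ℝ)..1, GA γ B t θ := by
    rw [intervalIntegral.integral_of_le (by norm_num : (0:ℝ) ≤ 1),
      MeasureTheory.integral_Icc_eq_integral_Ioc]
  have hsplit1 : (∫ θ in (0:ℝ)..1, GA γ B t θ)
      = (∫ θ in (0:ℝ)..(1/2:ℝ), GA γ B t θ) + ∫ θ in (1/2:ℝ)..1, GA γ B t θ :=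
    (intervalIntegral.integral_add_adjacent_intervals
      (hGc.intervalIntegrable _ _) (hGc.intervalIntegrable _ _)).symm
  have hrefl : (∫ θ in (1/2:ℝ)..1, GA γ B t θ) = ∫ θ in (0:ℝ)..(1/2:ℝ), GA γ B t θ := by
    have h1 : (∫ x in (0:ℝ)..(1/2:ℝ), GA γ B t (1-x))
        = ∫ x in (0:ℝ)..(1/2:ℝ), GA γ B t x :=
      intervalIntegral.integral_congr (fun x _ => GA_symm γ B t x)
    have h2 := intervalIntegral.integral_comp_sub_left (a:=(0:ℝ)) (b:=(1/2:ℝ)) (GA γ B t) 1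
    rw [h1] at h2
    rw [h2]
    norm_num
  have hItot : (∫ θ in Set.Icc (0:ℝ) 1, GA γ B t θ)
      = 2 * ∫ θ in (0:ℝ)..(1/2:ℝ), GA γ B t θ := by
    rw [hIcc, hsplit1, hrefl]; ring
  -- pointwise sin/cos bounds helper
  have hsinb : ∀ x : ℝ, 0 ≤ x → x ≤ 1/2 →
      16*x^2 ≤ wA x ∧ wA x ≤ 4*π^2*x^2 := by
    intro x hx0 hx12
    have hub : Real.sin (π*x) ≤ π*x := Real.sin_le (by positivity)
    have hlb : 2*x ≤ Real.sin (π*x) := by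
      have hhalf : π*x ≤ π/2 := by nlinarith [Real.pi_pos]
      have := Real.mul_le_sin (x := π*x) (by positivity) hhalf
      calc 2*x = 2/π*(π*x) := by field_simp
        _ ≤ Real.sin (π*x) := this
    have hs0 : 0 ≤ Real.sin (π*x) := le_trans (by linarith) hlb
    constructor
    · unfold wA; nlinarith [hlb, hs0]
    · unfold wA; nlinarith [hub, hs0]
  -- LOWER BOUND
  have ptlower : ∀ x ∈ Set.Icc (0:ℝ) r, c5 * x^2 ≤ GA γ B t x := by
    rintro x ⟨hx0, hxr⟩
    have hx14 : x ≤ 1/4 := hxr.trans hrle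
    obtain ⟨hw_lb, hw_ub⟩ := hsinb x hx0 (by linarith)
    have hcos : 1/4 ≤ Real.cos (π*x)^2 := by
      have hpi : π < 3.15 := Real.pi_lt_d2
      have hs2 : Real.sin (π*x)^2 ≤ (π*x)^2 := Real.sin_sq_le_sq
      have hpx : π*x ≤ 3.15*(1/4) := by nlinarith [Real.pi_pos]
      have hpx0 : (0:ℝ) ≤ π*x := by positivity
      have h315 : (π*x)^2 ≤ (3.15*(1/4))^2 := by nlinarith [hpx, hpx0]
      nlinarith [Real.sin_sq_add_cos_sq (π*x)]
    have hexp : Real.exp (-(16*π^4*c2)) ≤ Real.exp (-(c2*(wA x)^2)*t) := by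
      apply Real.exp_le_exp.2
      have h1 : (wA x)^2 ≤ 16*π^4*x^4 := by nlinarith [hw_ub, wA_nonneg x]
      have h2 : x^4 ≤ r^4 := pow_le_pow_left₀ hx0 hxr 4
      have h3 : (wA x)^2 * t ≤ 16*π^4 := by
        calc (wA x)^2*t ≤ 16*π^4*x^4*t := mul_le_mul_of_nonneg_right h1 htnn
          _ ≤ 16*π^4*(r^4*t) := by
              have := mul_le_mul_of_nonneg_left (mul_le_mul_of_nonneg_right h2 htnn)
                (by positivity : (0:ℝ) ≤ 16*π^4)
              linarith [this]
          _ = 16*π^4 := by rw [hr4t]; ring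
      nlinarith [mul_le_mul_of_nonneg_left h3 hc2.le]
    calc c5*x^2 = c3*(1/4)*(16*x^2)*Real.exp (-(16*π^4*c2)) := by rw [hc5def]; ring
      _ ≤ c3*Real.cos (π*x)^2*(wA x)*Real.exp (-(c2*(wA x)^2)*t) := by
          apply mul_le_mul _ hexp (Real.exp_nonneg _)
            (mul_nonneg (mul_nonneg hc3.le (sq_nonneg _)) (wA_nonneg x))
          apply mul_le_mul (mul_le_mul_of_nonneg_left hcos hc3.le) hw_lb (by positivity)
            (mul_nonneg hc3.le (sq_nonneg _))
      _ ≤ GA γ B t x := hge t x htnn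
  have hlow1 : (∫ x in (0:ℝ)..r, c5*x^2) ≤ ∫ x in (0:ℝ)..r, GA γ B t x :=
    intervalIntegral.integral_mono_on hr0.le
      ((continuous_const.mul (continuous_pow 2)).intervalIntegrable _ _)
      (hGc.intervalIntegrable _ _) ptlower
  have hlowval : (∫ x in (0:ℝ)..r, c5*x^2) = c5*(r^3/3) := by
    rw [intervalIntegral.integral_const_mul, integral_pow]
    norm_num
  have hI2low : c5*(r^3/3) ≤ ∫ θ in (0:ℝ)..(1/2:ℝ), GA γ B t θ := by
    have hadj : (∫ x in (0:ℝ)..r, GA γ B t x) + (∫ x in r..(1/2:ℝ), GA γ B t x)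
        = ∫ θ in (0:ℝ)..(1/2:ℝ), GA γ B t θ :=
      intervalIntegral.integral_add_adjacent_intervals
        (hGc.intervalIntegrable _ _) (hGc.intervalIntegrable _ _)
    have hmid : 0 ≤ ∫ x in r..(1/2:ℝ), GA γ B t x :=
      intervalIntegral.integral_nonneg hr12 (fun u _ => GA_nonneg γ B hγ hB t u)
    linarith [hlow1, hlowval.symm.le, hadj]
  -- UPPER BOUND
  set P : ℝ → ℝ := fun x => A*x^2*Real.exp (-(a*x^4)*t) with hPdef
  have hPc : Continuous P := by fun_prop
  have ptupper : ∀ x ∈ Set.Icc (0:ℝ) (1/2:ℝ), GA γ B t x ≤ P x := by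
    rintro x ⟨hx0, hx12⟩
    obtain ⟨hw_lb, hw_ub⟩ := hsinb x hx0 hx12
    have hexp2 : Real.exp (-(c1*(wA x)^2)*t) ≤ Real.exp (-(a*x^4)*t) := by
      apply Real.exp_le_exp.2
      have h1 : 256*x^4 ≤ (wA x)^2 := by nlinarith [hw_lb, wA_nonneg x, sq_nonneg x]
      rw [hadef]
      have := mul_le_mul_of_nonneg_right (mul_le_mul_of_nonneg_left h1 hc1.le) htnn
      linarith [this]
    calc GA γ B t x ≤ c4 * wA x * Real.exp (-(c1*(wA x)^2)*t) := hle t x htnn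
      _ ≤ A*x^2*Real.exp (-(a*x^4)*t) := by
          apply mul_le_mul _ hexp2 (Real.exp_nonneg _) (by positivity)
          calc c4 * wA x ≤ c4*(4*π^2*x^2) := mul_le_mul_of_nonneg_left hw_ub hc4.le
            _ = A*x^2 := by rw [hAdef]; ring
  have hup2 : (∫ θ in (0:ℝ)..(1/2:ℝ), GA γ B t θ) ≤ ∫ x in (0:ℝ)..(1/2:ℝ), P x :=
    intervalIntegral.integral_mono_on (by norm_num)
      (hGc.intervalIntegrable _ _) (hPc.intervalIntegrable _ _) ptupper
  have hPsplit : (∫ x in (0:ℝ)..(1/2:ℝ), P x)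
      = (∫ x in (0:ℝ)..r, P x) + ∫ x in r..(1/2:ℝ), P x :=
    (intervalIntegral.integral_add_adjacent_intervals
      (hPc.intervalIntegrable _ _) (hPc.intervalIntegrable _ _)).symm
  have hpart1 : (∫ x in (0:ℝ)..r, P x) ≤ A*(r^3/3) := by
    have h1 : (∫ x in (0:ℝ)..r, P x) ≤ ∫ x in (0:ℝ)..r, A*x^2 := by
      apply intervalIntegral.integral_mono_on hr0.le (hPc.intervalIntegrable _ _)
        ((continuous_const.mul (continuous_pow 2)).intervalIntegrable _ _)
      rintro x ⟨hx0, hxr⟩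
      rw [hPdef]
      have : Real.exp (-(a*x^4)*t) ≤ 1 := by
        rw [Real.exp_le_one_iff]
        have : 0 ≤ a*x^4*t := by positivity
        nlinarith
      calc A*x^2*Real.exp (-(a*x^4)*t) ≤ A*x^2*1 :=
            mul_le_mul_of_nonneg_left this (by positivity)
        _ = A*x^2 := by ring
    have h2 : (∫ x in (0:ℝ)..r, A*x^2) = A*(r^3/3) := by
      rw [intervalIntegral.integral_const_mul, integral_pow]; norm_num
    linarith
  have hpart2 : (∫ x in r..(1/2:ℝ), P x) ≤ (A/a)*r^3 := by
    set Q : ℝ → ℝ := fun x => (A/(a*t))*x^(-2:ℤ) with hQdef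
    have hQc : ContinuousOn Q (Set.uIcc r (1/2:ℝ)) := by
      apply ContinuousOn.mul continuousOn_const
      apply ContinuousOn.zpow₀ continuousOn_id
      intro x hx
      left
      show x ≠ 0
      rw [Set.uIcc_of_le hr12] at hx
      exact ne_of_gt (lt_of_lt_of_le hr0 hx.1)
    have hQi : IntervalIntegrable Q MeasureTheory.volume r (1/2:ℝ) :=
      hQc.intervalIntegrable
    have hPQ : ∀ x ∈ Set.Icc r (1/2:ℝ), P x ≤ Q x := by
      rintro x ⟨hxr, hx12⟩
      have hx0 : 0 < x := lt_of_lt_of_le hr0 hxr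
      have hy : 0 < a*x^4*t := by positivity
      have hexp3 : Real.exp (-(a*x^4)*t) ≤ 1/(a*x^4*t) := by
        rw [show -(a*x^4)*t = -(a*x^4*t) by ring]
        exact exp_neg_le_inv hy
      rw [hPdef, hQdef]
      calc A*x^2*Real.exp (-(a*x^4)*t) ≤ A*x^2*(1/(a*x^4*t)) :=
            mul_le_mul_of_nonneg_left hexp3 (by positivity)
        _ = (A/(a*t))*x^(-2:ℤ) := by
            have hx2 : x^(-2:ℤ) = (x^2)⁻¹ := by
              rw [zpow_neg, show ((2:ℤ)) = ((2:ℕ):ℤ) by norm_num, zpow_natCast]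
            rw [hx2]
            field_simp
    have h1 : (∫ x in r..(1/2:ℝ), P x) ≤ ∫ x in r..(1/2:ℝ), Q x :=
      intervalIntegral.integral_mono_on hr12 (hPc.intervalIntegrable _ _) hQi hPQ
    have hnotmem : (0:ℝ) ∉ Set.uIcc r (1/2:ℝ) := by
      rw [Set.uIcc_of_le hr12]
      rintro ⟨h0, -⟩
      exact absurd h0 (not_le.2 hr0)
    have h2 : (∫ x in r..(1/2:ℝ), Q x) = (A/(a*t))*(((1/2:ℝ)^(-1:ℤ) - r^(-1:ℤ))/(-1:ℝ)) := by
      rw [hQdef, intervalIntegral.integral_const_mul,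
        integral_zpow (Or.inr ⟨by norm_num, hnotmem⟩)]
      norm_num <;> exact Or.inl trivial
    have h3 : (A/(a*t))*(((1/2:ℝ)^(-1:ℤ) - r^(-1:ℤ))/(-1:ℝ)) ≤ (A/(a*t))*r⁻¹ := by
      apply mul_le_mul_of_nonneg_left _ (by positivity)
      have : ((1/2:ℝ)^(-1:ℤ) : ℝ) = 2 := by norm_num
      rw [this, zpow_neg_one]
      have : 0 < r⁻¹ := by positivity
      linarith
    have h4 : (A/(a*t))*r⁻¹ = (A/a)*r^3 := by
      rw [← htr]
      ring
    calc (∫ x in r..(1/2:ℝ), P x) ≤ ∫ x in r..(1/2:ℝ), Q x := h1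
      _ = (A/(a*t))*(((1/2:ℝ)^(-1:ℤ) - r^(-1:ℤ))/(-1:ℝ)) := h2
      _ ≤ (A/(a*t))*r⁻¹ := h3
      _ = (A/a)*r^3 := h4
  -- combine
  set C : ℝ := max (2*(A/3 + A/a) + 2) (3/(2*c5) + 2) with hCdef
  have hClow : 3/(2*c5) ≤ C := le_trans (by linarith) (le_max_right _ _)
  have hCup : 2*(A/3 + A/a) ≤ C := le_trans (by linarith) (le_max_left _ _)
  have hC0 : 0 < C := lt_of_lt_of_le (by positivity) hClow
  have hr3nn : 0 ≤ r^3 := by positivity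
  constructor
  · -- lower
    have h1 : (2*c5/3)*r^3 ≤ ∫ θ in Set.Icc (0:ℝ) 1, GA γ B t θ := by
      rw [hItot]
      linarith [hI2low]
    have h2 : 1/C ≤ 2*c5/3 := by
      have h3 : 0 < 3/(2*c5) := by positivity
      have := one_div_le_one_div_of_le h3 hClow
      rwa [one_div_div] at this
    calc (1/C) * t ^ (-(3:ℝ)/4) = (1/C)*r^3 := by rw [hr3]
      _ ≤ (2*c5/3)*r^3 := mul_le_mul_of_nonneg_right h2 hr3nn
      _ ≤ _ := h1
  · -- upper
    have h1 : (∫ θ in Set.Icc (0:ℝ) 1, GA γ B t θ) ≤ (2*(A/3 + A/a))*r^3 := by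
      rw [hItot]
      have : (∫ θ in (0:ℝ)..(1/2:ℝ), GA γ B t θ) ≤ A*(r^3/3) + (A/a)*r^3 := by
        calc (∫ θ in (0:ℝ)..(1/2:ℝ), GA γ B t θ) ≤ ∫ x in (0:ℝ)..(1/2:ℝ), P x := hup2
          _ = (∫ x in (0:ℝ)..r, P x) + ∫ x in r..(1/2:ℝ), P x := hPsplit
          _ ≤ A*(r^3/3) + (A/a)*r^3 := add_le_add hpart1 hpart2
      have hAa : (2*(A/3 + A/a))*r^3 = 2*(A*(r^3/3) + (A/a)*r^3) := by field_simp
      linarith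
    calc (∫ θ in Set.Icc (0:ℝ) 1, GA γ B t θ) ≤ (2*(A/3 + A/a))*r^3 := h1
      _ ≤ C*r^3 := mul_le_mul_of_nonneg_right hCup hr3nn
      _ = C * t ^ (-(3:ℝ)/4) := by rw [hr3]

lemma mainA (γ B : ℝ) (hγ : 0 < γ) (hB : B ≠ 0) :
    ∃ C : ℝ, 1 < C ∧ ∃ T : ℝ, ∀ t : ℝ, T ≤ t →
      (1/C) * t ^ (-(3:ℝ)/4) ≤ (∫ θ in Set.Icc (0:ℝ) 1, GA γ B t θ) ∧
      (∫ θ in Set.Icc (0:ℝ) 1, GA γ B t θ) ≤ C * t ^ (-(3:ℝ)/4) := by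
  have hB2 : 0 < B^2 := by positivity
  have hK1 : 0 < B^2 + 16*γ^2 + 16 + 8*γ*|B| := by positivity
  apply integral_bounds γ B hγ hB
    (2*γ/(16*γ^2+(B^2 + 16*γ^2 + 16 + 8*γ*|B|)))
    (4*γ/B^2)
    (2*B^2/((16*γ^2+B^2)*(B^2 + 16*γ^2 + 16 + 8*γ*|B|)))
    (2/B^2)
    (by positivity) (by positivity) (by positivity) (by positivity)
  · intro t θ ht
    exact GA_le γ B hγ hB t θ ht
  · intro t θ ht
    exact GA_ge γ B hγ hB t θ ht



/-- the term C₃(t) behaves as t^{-3/4} (d = 1), giving the exponent 1/4. -/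
theorem stmt4 (γ B : ℝ) (hγ : 0 < γ) (hB : B ≠ 0) :
    let w : ℝ → ℝ := fun θ => 4 * Real.sin (π * θ)^2
    let D : ℝ → ℝ := fun θ =>
      Real.sqrt ((B^2 - γ^2*(w θ)^2 + 4*(w θ))^2 + 4*γ^2*B^2*(w θ)^2)
    let a1sq : ℝ → ℝ := fun θ => ((B^2 - γ^2*(w θ)^2 + 4*(w θ)) + D θ)/2
    let a2sq : ℝ → ℝ := fun θ => (-(B^2 - γ^2*(w θ)^2 + 4*(w θ)) + D θ)/2
    let a2 : ℝ → ℝ := fun θ => Real.sqrt (a2sq θ)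
    let b2 : ℝ → ℝ := fun θ => (a1sq θ - B^2)/(2*(a1sq θ + a2sq θ))
    let C3 : ℝ → ℝ := fun t => ∫ θ in Set.Icc (0:ℝ) 1,
      Real.sin (2*π*θ)^2/(w θ) * b2 θ * Real.exp (-(γ * w θ - a2 θ)*t)
    ∃ C : ℝ, 1 < C ∧ ∃ T : ℝ, ∀ t : ℝ, T ≤ t →
      (1/C) * t ^ (-(3:ℝ)/4) ≤ C3 t ∧ C3 t ≤ C * t ^ (-(3:ℝ)/4) := by
  intro w D a1sq a2sq a2 b2 C3
  obtain ⟨C, hC, T, h⟩ := mainA γ B hγ hB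
  refine ⟨C, hC, T, fun t ht => ?_⟩
  have he : C3 t = ∫ θ in Set.Icc (0:ℝ) 1, GA γ B t θ := by
    have h0 : C3 t = ∫ θ in Set.Icc (0:ℝ) 1,
        Real.sin (2*π*θ)^2/(wA θ) * b2A γ B θ * Real.exp (-(γ * wA θ - a2A γ B θ)*t) := rfl
    rw [h0, C3eqA]
  rw [he]
  exact h t ht
end

section
/- Fix $\gamma > 0$ and $\tilde B > 0$. Let $\tilde\alpha_1(\theta)$ be, for $\theta$ near $0$, the real root of the cubic $T(Y)$ (as defined with $\gamma_\theta = \gamma\sin(2\pi\theta)$) satisfying $\tilde\alpha_1(\theta) \in (-\gamma^2, 0)$ and $\tilde\alpha_1(0) = 0$. Then $\lim_{\theta \to 0}\frac{\tilde\alpha_1(\theta)}{\sin^2(2\pi\theta)} = -\frac{\gamma^2(2\tilde B^2 + 1)}{(\tilde B^2 + 1)^2}$. -/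
/-!
Writing `s = sin²(2πθ)` and using `cos² = 1 - s`, the cubic splits as
`T(Y) = Y (Y + B̃² + 1)² - s · R(s, Y)` with `R` a polynomial and `R(0, 0) = -γ²(2B̃² + 1)`.
Hence on the root branch `α̃₁(θ) / s = R(s, α̃₁) / (α̃₁ + B̃² + 1)²`, and letting `θ → 0`
(so `s → 0` and `α̃₁ → 0`) gives the limit `R(0, 0) / (B̃² + 1)²`.
-/

open Real Filter Topology

/-- The cubic `T(Y)` of the paper, with `g = γ_θ` and `c = cos(2πθ)`. -/
def cubicT (B g c Y : ℝ) : ℝ :=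
  Y^3 + 2*(1 + B^2 + g^2)*Y^2 + (B^4 + 2*(1 + g^2)*B^2 + c^2 + 4*g^2 + g^4)*Y +
    2*B^2*g^2 + g^2*c^2 + 2*g^4

def cubicTRemainder (γ B s Y : ℝ) : ℝ :=
  Y - 2*γ^2*Y^2 - (2*B^2 + 4)*γ^2*Y - γ^4*s*Y - γ^2*(2*B^2 + 1) + γ^2*s - 2*γ^4*s

theorem cubicT_eq_of_sq_add_sq {γ B σ c : ℝ} (h : σ^2 + c^2 = 1) (Y : ℝ) :
    cubicT B (γ*σ) c Y = Y*(Y + B^2 + 1)^2 - σ^2 * cubicTRemainder γ B (σ^2) Y := by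
  rw [cubicT, cubicTRemainder, show c^2 = 1 - σ^2 by linarith]
  ring

theorem continuous_cubicTRemainder (γ B : ℝ) :
    Continuous fun p : ℝ × ℝ => cubicTRemainder γ B p.1 p.2 := by
  unfold cubicTRemainder
  fun_prop

theorem Filter.Tendsto.div_of_mul_eq_mul {ι 𝕜 : Type*} [NormedField 𝕜] {l : Filter ι}
    {f g u v : ι → 𝕜} {a b : 𝕜} (h : ∀ᶠ x in l, f x * u x = g x * v x)
    (hg : ∀ᶠ x in l, g x ≠ 0) (hu : Tendsto u l (𝓝 a)) (hv : Tendsto v l (𝓝 b)) (ha : a ≠ 0) :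
    Tendsto (fun x => f x / g x) l (𝓝 (b / a)) := by
  refine (hv.div hu ha).congr' ?_
  filter_upwards [h, hg, hu.eventually_ne ha] with x hx hgx hux
  rw [Pi.div_apply, div_eq_div_iff hux hgx, hx, mul_comm]

theorem eventually_sin_two_pi_mul_ne_zero : ∀ᶠ θ in 𝓝[>] (0:ℝ), sin (2*π*θ) ≠ 0 := by
  filter_upwards [Ioo_mem_nhdsGT (show (0:ℝ) < 1/2 by norm_num)] with θ ⟨hθ0, hθ1⟩
  exact (sin_pos_of_pos_of_lt_pi (by positivity) (by nlinarith [pi_pos])).ne'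

theorem tendsto_sin_two_pi_mul_sq :
    Tendsto (fun θ : ℝ => sin (2*π*θ)^2) (𝓝[>] (0:ℝ)) (𝓝 0) := by
  have h : Continuous fun θ : ℝ => sin (2*π*θ)^2 := by fun_prop
  simpa using (h.tendsto 0).mono_left nhdsWithin_le_nhds

theorem stmt11_general (γ Bt : ℝ)
    (α : ℝ → ℝ)
    (hroot : ∀ᶠ θ in 𝓝[>] (0:ℝ),
      α θ ∈ Set.Ioo (-γ^2) 0 ∧
      (α θ)^3 + 2*(1 + Bt^2 + (γ*Real.sin (2*π*θ))^2)*(α θ)^2 +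
        (Bt^4 + 2*(1 + (γ*Real.sin (2*π*θ))^2)*Bt^2 + Real.cos (2*π*θ)^2 +
          4*(γ*Real.sin (2*π*θ))^2 + (γ*Real.sin (2*π*θ))^4)*(α θ) +
        2*Bt^2*(γ*Real.sin (2*π*θ))^2 +
          (γ*Real.sin (2*π*θ))^2*Real.cos (2*π*θ)^2 + 2*(γ*Real.sin (2*π*θ))^4 = 0)
    (hcont : Tendsto α (𝓝[>] (0:ℝ)) (𝓝 0)) :
    Tendsto (fun θ => α θ / Real.sin (2*π*θ)^2) (𝓝[>] (0:ℝ))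
      (𝓝 (-(γ^2*(2*Bt^2 + 1))/(Bt^2 + 1)^2)) := by
  have hsplit : ∀ᶠ θ in 𝓝[>] (0:ℝ), α θ * (α θ + Bt^2 + 1)^2 =
      sin (2*π*θ)^2 * cubicTRemainder γ Bt (sin (2*π*θ)^2) (α θ) := by
    filter_upwards [hroot] with θ ⟨_, hT⟩
    have hT : cubicT Bt (γ * sin (2*π*θ)) (cos (2*π*θ)) (α θ) = 0 := hT
    rw [cubicT_eq_of_sq_add_sq (sin_sq_add_cos_sq _)] at hT
    linarith
  have hR : Tendsto (fun θ => cubicTRemainder γ Bt (sin (2*π*θ)^2) (α θ)) (𝓝[>] (0:ℝ))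
      (𝓝 (-(γ^2*(2*Bt^2 + 1)))) := by
    have hR₀ : cubicTRemainder γ Bt 0 0 = -(γ^2*(2*Bt^2 + 1)) := by
      simp only [cubicTRemainder]
      ring
    have h := ((continuous_cubicTRemainder γ Bt).tendsto (0, 0)).comp
      (tendsto_sin_two_pi_mul_sq.prodMk_nhds hcont)
    rwa [← hR₀]
  have hD : Tendsto (fun θ => (α θ + Bt^2 + 1)^2) (𝓝[>] (0:ℝ)) (𝓝 ((Bt^2 + 1)^2)) := by
    simpa using ((hcont.add_const (Bt^2)).add_const 1).pow 2
  exact Tendsto.div_of_mul_eq_mul hsplit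
    (eventually_sin_two_pi_mul_ne_zero.mono fun _ h => pow_ne_zero 2 h) hD hR (by positivity)

/-- asymptotics of the root branch α̃₁(θ) of the cubic T near θ = 0. -/
theorem stmt11 (γ Bt : ℝ) (hγ : 0 < γ) (hBt : 0 < Bt)
    (α : ℝ → ℝ)
    (hroot : ∀ᶠ θ in 𝓝[>] (0:ℝ),
      α θ ∈ Set.Ioo (-γ^2) 0 ∧
      (α θ)^3 + 2*(1 + Bt^2 + (γ*Real.sin (2*π*θ))^2)*(α θ)^2 +
        (Bt^4 + 2*(1 + (γ*Real.sin (2*π*θ))^2)*Bt^2 + Real.cos (2*π*θ)^2 +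
          4*(γ*Real.sin (2*π*θ))^2 + (γ*Real.sin (2*π*θ))^4)*(α θ) +
        2*Bt^2*(γ*Real.sin (2*π*θ))^2 +
          (γ*Real.sin (2*π*θ))^2*Real.cos (2*π*θ)^2 + 2*(γ*Real.sin (2*π*θ))^4 = 0)
    (hα0 : α 0 = 0)
    (hcont : Tendsto α (𝓝[>] (0:ℝ)) (𝓝 0)) :
    Tendsto (fun θ => α θ / Real.sin (2*π*θ)^2) (𝓝[>] (0:ℝ))
      (𝓝 (-(γ^2*(2*Bt^2 + 1))/(Bt^2 + 1)^2)) :=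
  stmt11_general γ Bt α hroot hcont
end
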